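/- arXiv:math/0503118 — 12 statements merged into one kernel-verified Lean document; each statement's English description precedes it below -/
import Mathlib

section
/- Let n₀ ≥ 2 be an integer and define f : ℝ → ℝ by f(s) = (s + n₀ - 1)^{n₀} / n₀^{n₀}. Define g : ℕ → ℝ → ℝ recursively by g 0 s = s and g (n+1) s = s * f (g n s), and set h n θ = Real.log (g n (Real.exp θ)). Then for every real α with 1 < α ≤ 2, every n ∈ ℕ, and every real θ with 0 ≤ θ ≤ (α - 1)/(1 + α*n)^2, one has h n θ ≤ (1 + α*n) * θ. -/
lemma exp_quad_bound {x : ℝ} (h0 : 0 ≤ x) (h1 : x ≤ 1) : Real.exp x ≤ 1 + x + x ^ 2 := by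
  have hb := Real.exp_bound (x := x) (by rw [abs_of_nonneg h0]; exact h1) (n := 2) (by norm_num)
  rw [abs_of_nonneg h0] at hb
  have hsum : (∑ i ∈ Finset.range 2, x ^ i / (Nat.factorial i)) = 1 + x := by
    simp [Finset.sum_range_succ, Nat.factorial]
  rw [hsum] at hb
  have hb2 := (abs_le.mp hb).2
  norm_num [Nat.factorial] at hb2
  nlinarith [sq_nonneg x]

/-- Lemma 2.1(a): bound on the cumulant generating function of the total
population of the critical Galton–Watson process with `Bin(n₀, 1/n₀)` offspring. -/
theorem gw_total_population_cgf_bound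
    (n₀ : ℕ) (hn₀ : 2 ≤ n₀)
    (f : ℝ → ℝ) (hf : ∀ s, f s = (s + n₀ - 1) ^ n₀ / n₀ ^ n₀)
    (g : ℕ → ℝ → ℝ) (hg0 : ∀ s, g 0 s = s)
    (hgs : ∀ n s, g (n + 1) s = s * f (g n s))
    (h : ℕ → ℝ → ℝ) (hh : ∀ n θ, h n θ = Real.log (g n (Real.exp θ)))
    (α : ℝ) (hα1 : 1 < α) (hα2 : α ≤ 2) (n : ℕ) (θ : ℝ)
    (hθ0 : 0 ≤ θ) (hθ : θ ≤ (α - 1) / (1 + α * n) ^ 2) :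
    h n θ ≤ (1 + α * n) * θ := by
  have hn0pos : (0:ℝ) < (n₀ : ℝ) := by
    have : (2:ℝ) ≤ (n₀ : ℝ) := by exact_mod_cast hn₀
    linarith
  have hf_ge : ∀ s : ℝ, 1 ≤ s → 1 ≤ f s := by
    intro s hs
    rw [hf, le_div_iff₀ (by positivity)]
    have : (n₀:ℝ) ^ n₀ ≤ (s + n₀ - 1) ^ n₀ :=
      pow_le_pow_left₀ (le_of_lt hn0pos) (by linarith) _
    linarith
  have hg_ge : ∀ m (θ' : ℝ), 0 ≤ θ' → 1 ≤ g m (Real.exp θ') := by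
    intro m
    induction m with
    | zero => intro θ' hθ'; rw [hg0]; exact Real.one_le_exp hθ'
    | succ k ih =>
      intro θ' hθ'
      rw [hgs]
      have hs := ih θ' hθ'
      have hfs := hf_ge _ hs
      nlinarith [Real.one_le_exp hθ']
  have hlogf : ∀ s : ℝ, 1 ≤ s → Real.log (f s) ≤ s - 1 := by
    intro s hs
    have hdiv : f s = ((s + n₀ - 1) / n₀) ^ n₀ := by rw [hf, div_pow]
    rw [hdiv, Real.log_pow]
    have ht : 0 < (s + (n₀:ℝ) - 1) / n₀ := div_pos (by linarith) hn0pos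
    have hlt := Real.log_le_sub_one_of_pos ht
    have heq : (n₀:ℝ) * ((s + n₀ - 1) / n₀ - 1) = s - 1 := by
      field_simp
      ring
    calc (n₀:ℝ) * Real.log ((s + n₀ - 1) / n₀)
        ≤ (n₀:ℝ) * ((s + n₀ - 1) / n₀ - 1) :=
          mul_le_mul_of_nonneg_left hlt (le_of_lt hn0pos)
      _ = s - 1 := heq
  induction n generalizing θ with
  | zero =>
    rw [hh, hg0, Real.log_exp]
    push_cast
    nlinarith
  | succ k ih =>
    have hknn : (0:ℝ) ≤ (k:ℝ) := Nat.cast_nonneg k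
    have hα0 : (0:ℝ) < α := by linarith
    have hb1 : (1:ℝ) ≤ 1 + α * k := by nlinarith
    have hB1 : (1:ℝ) ≤ 1 + α * ((k:ℝ) + 1) := by nlinarith
    have hBcast : (1 + α * ((k + 1 : ℕ) : ℝ)) = 1 + α * ((k:ℝ) + 1) := by push_cast; ring
    rw [hBcast] at hθ ⊢
    have hθB : θ * (1 + α * ((k:ℝ) + 1)) ^ 2 ≤ α - 1 := by
      rw [le_div_iff₀ (by positivity)] at hθ; exact hθ
    have hbB : 1 + α * (k:ℝ) ≤ 1 + α * ((k:ℝ) + 1) := by nlinarith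
    have hb2B2 : (1 + α * (k:ℝ)) ^ 2 ≤ (1 + α * ((k:ℝ) + 1)) ^ 2 := by nlinarith
    have hθb : θ ≤ (α - 1) / (1 + α * (k:ℝ)) ^ 2 := by
      rw [le_div_iff₀ (by positivity)]
      nlinarith [mul_le_mul_of_nonneg_left hb2B2 hθ0]
    have hIH := ih θ hθ0 hθb
    have hbθ1 : (1 + α * (k:ℝ)) * θ ≤ 1 := by
      nlinarith [mul_le_mul_of_nonneg_left hb2B2 hθ0,
        mul_nonneg (mul_nonneg (by linarith : (0:ℝ) ≤ α * k) (by linarith : (0:ℝ) ≤ 1 + α * k)) hθ0]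
    have hs1 : 1 ≤ g k (Real.exp θ) := hg_ge k θ hθ0
    have hspos : 0 < g k (Real.exp θ) := by linarith
    have hfs1 : 1 ≤ f (g k (Real.exp θ)) := hf_ge _ hs1
    have hsplit : h (k + 1) θ = θ + Real.log (f (g k (Real.exp θ))) := by
      rw [hh, hgs, Real.log_mul (Real.exp_ne_zero θ) (by linarith), Real.log_exp]
    have hsexp : g k (Real.exp θ) = Real.exp (h k θ) := by
      rw [hh, Real.exp_log hspos]
    have hsub : g k (Real.exp θ) ≤ 1 + (1 + α * k) * θ + ((1 + α * k) * θ) ^ 2 := by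
      rw [hsexp]
      calc Real.exp (h k θ) ≤ Real.exp ((1 + α * k) * θ) := Real.exp_le_exp.mpr hIH
        _ ≤ 1 + (1 + α * k) * θ + ((1 + α * k) * θ) ^ 2 :=
            exp_quad_bound (by positivity) hbθ1
    have hlog := hlogf _ hs1
    have hq : ((1 + α * (k:ℝ)) * θ) ^ 2 ≤ (α - 1) * θ := by
      have h1 := mul_le_mul_of_nonneg_left (mul_le_mul_of_nonneg_left hb2B2 hθ0) hθ0
      have h2 := mul_le_mul_of_nonneg_left hθB hθ0
      nlinarith [h1, h2]
    rw [hsplit]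
    linarith
end

section
/- Let n₀ ≥ 2 be an integer and define f : ℝ → ℝ by f(s) = (s + n₀ - 1)^{n₀} / n₀^{n₀}. Let F : ℕ → ℝ → ℝ be the iterates F 0 s = s, F (n+1) s = f (F n s), and set k n θ = Real.log (F n (Real.exp θ)). Then for every n ≥ 1 and every real θ with 0 < θ ≤ 1/(6*n), one has k n θ ≤ θ + 2*n*θ^2. -/
/-- Lemma 2.1(b): bound on the cumulant generating function of generation `n`
of the critical Galton–Watson process with `Bin(n₀, 1/n₀)` offspring. -/
theorem gw_generation_cgf_bound
    (n₀ : ℕ) (hn₀ : 2 ≤ n₀)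
    (f : ℝ → ℝ) (hf : ∀ s, f s = (s + n₀ - 1) ^ n₀ / n₀ ^ n₀)
    (F : ℕ → ℝ → ℝ) (hF0 : ∀ s, F 0 s = s)
    (hFs : ∀ n s, F (n + 1) s = f (F n s))
    (k : ℕ → ℝ → ℝ) (hk : ∀ n θ, k n θ = Real.log (F n (Real.exp θ)))
    (n : ℕ) (hn : 1 ≤ n) (θ : ℝ)
    (hθ0 : 0 < θ) (hθ : θ ≤ 1 / (6 * n)) :
    k n θ ≤ θ + 2 * n * θ ^ 2 := by
  have hn₀R : (2 : ℝ) ≤ (n₀ : ℝ) := by exact_mod_cast hn₀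
  have hn₀pos : (0 : ℝ) < (n₀ : ℝ) := by linarith
  have hnR : (1 : ℝ) ≤ (n : ℝ) := by exact_mod_cast hn
  have hθ6 : θ ≤ 1 / 6 := by
    have h6n : (6 : ℝ) ≤ 6 * n := by linarith
    calc θ ≤ 1 / (6 * n) := hθ
      _ ≤ 1 / 6 := by
        apply one_div_le_one_div_of_le <;> linarith
  -- f maps [1,∞) into [1,∞)
  have hf1 : ∀ s : ℝ, 1 ≤ s → 1 ≤ f s := by
    intro s hs
    rw [hf, le_div_iff₀ (by positivity)]
    have : (n₀ : ℝ) ≤ s + n₀ - 1 := by linarith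
    calc (1 : ℝ) * (n₀ : ℝ) ^ n₀ = (n₀ : ℝ) ^ n₀ := by ring
      _ ≤ (s + n₀ - 1) ^ n₀ := pow_le_pow_left₀ (by positivity) this n₀
  -- log f s ≤ s - 1 for s ≥ 1
  have hlogf : ∀ s : ℝ, 1 ≤ s → Real.log (f s) ≤ s - 1 := by
    intro s hs
    have hfs : 0 < f s := lt_of_lt_of_le one_pos (hf1 s hs)
    rw [Real.log_le_iff_le_exp hfs, hf, div_le_iff₀ (by positivity)]
    have key : s + n₀ - 1 ≤ Real.exp ((s - 1) / n₀) * n₀ := by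
      have h1 : (s - 1) / n₀ + 1 ≤ Real.exp ((s - 1) / n₀) := Real.add_one_le_exp _
      have h2 : ((s - 1) / n₀ + 1) * n₀ = s + n₀ - 1 := by field_simp; ring
      nlinarith
    calc (s + n₀ - 1) ^ n₀ ≤ (Real.exp ((s - 1) / n₀) * n₀) ^ n₀ :=
          pow_le_pow_left₀ (by linarith) key n₀
      _ = Real.exp ((s - 1) / n₀) ^ n₀ * (n₀ : ℝ) ^ n₀ := by rw [mul_pow]
      _ = Real.exp (s - 1) * (n₀ : ℝ) ^ n₀ := by
          rw [← Real.exp_nat_mul]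
          congr 1
          field_simp
  -- exp x ≤ 1 + x + x^2 for 0 ≤ x ≤ 1
  have hexp : ∀ x : ℝ, 0 ≤ x → x ≤ 1 → Real.exp x ≤ 1 + x + x ^ 2 := by
    intro x hx0 hx1
    have h := Real.exp_bound' hx0 hx1 (n := 3) (by norm_num)
    have hsum : (∑ m ∈ Finset.range 3, x ^ m / m.factorial) = 1 + x + x ^ 2 / 2 := by
      simp [Finset.sum_range_succ, Nat.factorial]
    rw [hsum] at h
    have h3 : x ^ 3 ≤ x ^ 2 := pow_le_pow_of_le_one hx0 hx1 (by norm_num)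
    norm_num [Nat.factorial] at h
    nlinarith
  -- F m (exp θ) ≥ 1
  have hFge : ∀ m : ℕ, 1 ≤ F m (Real.exp θ) := by
    intro m
    induction m with
    | zero => rw [hF0]; exact Real.one_le_exp hθ0.le
    | succ m ih => rw [hFs]; exact hf1 _ ih
  have hkpos : ∀ m : ℕ, 0 ≤ k m θ := by
    intro m
    rw [hk]
    exact Real.log_nonneg (hFge m)
  have hFexp : ∀ m : ℕ, F m (Real.exp θ) = Real.exp (k m θ) := by
    intro m
    rw [hk, Real.exp_log (lt_of_lt_of_le one_pos (hFge m))]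
  -- main induction
  have main : ∀ m : ℕ, m ≤ n → k m θ ≤ θ + 2 * m * θ ^ 2 := by
    intro m
    induction m with
    | zero =>
      intro _
      rw [hk, hF0, Real.log_exp]
      nlinarith
    | succ m ih =>
      intro hmn
      have hm : m ≤ n := le_of_lt (Nat.lt_of_succ_le hmn)
      have IH := ih hm
      have hmR : (m : ℝ) ≤ (n : ℝ) := by exact_mod_cast hm
      set φ := k m θ with hφ
      have hφ0 : 0 ≤ φ := hkpos m
      -- φ ≤ 4θ/3 ≤ 1
      have hnθ : (n : ℝ) * θ ≤ 1 / 6 := by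
        have h1 : (n : ℝ) * θ ≤ (n : ℝ) * (1 / (6 * n)) :=
          mul_le_mul_of_nonneg_left hθ (by positivity)
        have h2 : (n : ℝ) * (1 / (6 * n)) = 1 / 6 := by
          field_simp
        linarith
      have hφ43 : φ ≤ 4 * θ / 3 := by nlinarith
      have hφ1 : φ ≤ 1 := by nlinarith
      have step : k (m + 1) θ ≤ φ + φ ^ 2 := by
        rw [hk, hFs, hFexp]
        have h1 : Real.log (f (Real.exp φ)) ≤ Real.exp φ - 1 :=
          hlogf _ (Real.one_le_exp hφ0)
        have h2 : Real.exp φ ≤ 1 + φ + φ ^ 2 := hexp φ hφ0 hφ1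
        linarith
      have : φ + φ ^ 2 ≤ θ + 2 * (m + 1) * θ ^ 2 := by nlinarith
      calc k (m + 1) θ ≤ φ + φ ^ 2 := step
        _ ≤ θ + 2 * (m + 1) * θ ^ 2 := this
        _ = θ + 2 * ((m : ℕ) + 1 : ℕ) * θ ^ 2 := by push_cast; ring
  exact main n le_rfl
end

section
/- For every real a ≥ 1 and every real x with 0 ≤ x ≤ 1, one has a * Real.log (1 + (Real.exp x - 1)/a) ≤ x + x^2. -/
/-- The key recursion inequality (2.5)–(2.6): for `a ≥ 1` and `0 ≤ x ≤ 1`,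
`a log(1 + (eˣ - 1)/a) ≤ x + x²`. -/
theorem log_one_add_exp_sub_one_div_le
    (a : ℝ) (ha : 1 ≤ a) (x : ℝ) (hx0 : 0 ≤ x) (hx1 : x ≤ 1) :
    a * Real.log (1 + (Real.exp x - 1) / a) ≤ x + x ^ 2 := by
  have ha0 : (0:ℝ) < a := lt_of_lt_of_le one_pos ha
  have hexp1 : 1 ≤ Real.exp x := Real.one_le_exp hx0
  have ht : 0 ≤ (Real.exp x - 1) / a := div_nonneg (by linarith) ha0.le
  have hlog : Real.log (1 + (Real.exp x - 1) / a) ≤ (Real.exp x - 1) / a := by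
    have := Real.log_le_sub_one_of_pos (x := 1 + (Real.exp x - 1) / a) (by linarith)
    linarith
  have h1 : a * Real.log (1 + (Real.exp x - 1) / a) ≤ Real.exp x - 1 := by
    calc a * Real.log (1 + (Real.exp x - 1) / a)
        ≤ a * ((Real.exp x - 1) / a) := by
          exact mul_le_mul_of_nonneg_left hlog ha0.le
      _ = Real.exp x - 1 := by field_simp
  have hb : Real.exp x ≤ 1 + x + x ^ 2 := by
    have habs : |x| ≤ 1 := by rw [abs_of_nonneg hx0]; exact hx1
    have := Real.exp_bound habs (n := 2) (by norm_num)
    have hsum : ∑ i ∈ Finset.range 2, x ^ i / (Nat.factorial i : ℝ) = 1 + x := by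
      simp [Finset.sum_range_succ, Nat.factorial]
    rw [hsum] at this
    have h2 : Real.exp x - (1 + x) ≤ |x| ^ 2 * ((2:ℕ).succ / ((Nat.factorial 2 : ℝ) * 2)) :=
      le_trans (le_abs_self _) this
    have : Real.exp x - (1 + x) ≤ x ^ 2 * (3 / 4) := by
      rw [abs_of_nonneg hx0] at h2
      convert h2 using 2
      norm_num [Nat.factorial]
    nlinarith [sq_nonneg x]
  linarith
end

section
/- Let n₀ ≥ 2 be an integer, f(s) = (s + n₀ - 1)^{n₀} / n₀^{n₀}, and let f_n denote the n-fold iterate of f (with f_0 the identity). Let (Ω, 𝓕, P) be a probability space, n ≥ 1 a natural number, and S : Ω → ℝ a measurable function such that ω ↦ Real.exp (S ω / (6*n)) is integrable and ∫ Real.exp (S ω / (6*n)) dP(ω) ≤ (f_n (Real.exp (1/(6*n))))^n. Then for every real λ, P({ω | S ω ≥ λ*n}) ≤ Real.exp (2/9 - λ/6). -/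
open MeasureTheory

lemma exp_le_quadratic {u : ℝ} (h0 : 0 ≤ u) (h1 : u ≤ 1) :
    Real.exp u ≤ 1 + u + u ^ 2 := by
  have := Real.abs_exp_sub_one_sub_id_le (x := u) (by rw [abs_of_nonneg h0]; exact h1)
  have := (abs_le.mp this).2
  linarith

/-- Chernoff-bound content of inequality (2.7) of Lemma 2.2: if
`E[e^{S/(6n)}] ≤ f_n(e^{1/(6n)})^n` where `f_n` is the `n`-th iterate of the
generating function of `Bin(n₀, 1/n₀)`, then `P(S ≥ λn) ≤ e^{2/9 - λ/6}`. -/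
theorem gw_sum_upper_tail
    (n₀ : ℕ) (hn₀ : 2 ≤ n₀)
    (f : ℝ → ℝ) (hf : ∀ s, f s = (s + n₀ - 1) ^ n₀ / n₀ ^ n₀)
    {Ω : Type*} [MeasurableSpace Ω] (P : Measure Ω) [IsProbabilityMeasure P]
    (n : ℕ) (hn : 1 ≤ n) (S : Ω → ℝ) (hS : Measurable S)
    (hint : Integrable (fun ω => Real.exp (S ω / (6 * n))) P)
    (hbound : ∫ ω, Real.exp (S ω / (6 * n)) ∂P ≤ (f^[n] (Real.exp (1 / (6 * n)))) ^ n)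
    (lam : ℝ) :
    (P {ω | S ω ≥ lam * n}).toReal ≤ Real.exp (2 / 9 - lam / 6) := by
  have hnpos : (0:ℝ) < n := by exact_mod_cast hn
  set θ : ℝ := 1 / (6 * n) with hθ
  have hθpos : 0 < θ := by positivity
  have h1n' : (1:ℝ) ≤ (n:ℝ) := by exact_mod_cast hn
  have hθ6 : θ ≤ 1 / 6 := by
    rw [hθ]
    rw [div_le_div_iff₀ (by positivity) (by norm_num)]
    nlinarith
  have hnθ : (n : ℝ) * θ = 1 / 6 := by
    rw [hθ]; field_simp
  have hn₀pos : (0:ℝ) < (n₀:ℝ) := by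
    have : (2:ℝ) ≤ (n₀:ℝ) := by exact_mod_cast hn₀
    linarith
  -- monotonicity of f on [1, ∞) and preservation of ≥ 1
  have hf_mono : ∀ x y : ℝ, 1 ≤ x → x ≤ y → f x ≤ f y := by
    intro x y hx hxy
    rw [hf, hf]
    apply div_le_div_of_nonneg_right ?_ (by positivity)
    apply pow_le_pow_left₀ (by linarith) (by linarith)
  have hf_one : ∀ x : ℝ, 1 ≤ x → 1 ≤ f x := by
    intro x hx
    rw [hf]
    rw [le_div_iff₀ (by positivity), one_mul]
    apply pow_le_pow_left₀ (by positivity) (by linarith)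
  -- key step: f(exp u) ≤ exp (u + u²) for 0 ≤ u ≤ 1
  have hstep : ∀ u : ℝ, 0 ≤ u → u ≤ 1 → f (Real.exp u) ≤ Real.exp (u + u ^ 2) := by
    intro u h0 h1
    rw [hf]
    have ht : 0 ≤ Real.exp u - 1 := by
      have := Real.one_le_exp h0; linarith
    have h2 : Real.exp u + n₀ - 1 = (1 + (Real.exp u - 1) / n₀) * n₀ := by
      field_simp; ring
    have h3 : (1 + (Real.exp u - 1) / n₀) ^ n₀ ≤ Real.exp (Real.exp u - 1) := by
      calc (1 + (Real.exp u - 1) / n₀) ^ n₀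
          ≤ (Real.exp ((Real.exp u - 1) / n₀)) ^ n₀ := by
            apply pow_le_pow_left₀ (by positivity)
            have := Real.add_one_le_exp ((Real.exp u - 1) / n₀)
            linarith
        _ = Real.exp (Real.exp u - 1) := by
            rw [← Real.exp_nat_mul]
            congr 1
            field_simp
    have h4 : Real.exp u - 1 ≤ u + u ^ 2 := by
      have := exp_le_quadratic h0 h1; linarith
    calc (Real.exp u + n₀ - 1) ^ n₀ / n₀ ^ n₀
        = (1 + (Real.exp u - 1) / n₀) ^ n₀ := by
          rw [h2, mul_pow, mul_div_assoc, div_self (by positivity), mul_one]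
      _ ≤ Real.exp (Real.exp u - 1) := h3
      _ ≤ Real.exp (u + u ^ 2) := Real.exp_le_exp.mpr h4
  -- induction: for m ≤ n, 1 ≤ f^[m](e^θ) and f^[m](e^θ) ≤ exp(θ + 2mθ²)
  have hiter : ∀ m : ℕ, m ≤ n →
      1 ≤ f^[m] (Real.exp θ) ∧ f^[m] (Real.exp θ) ≤ Real.exp (θ + 2 * m * θ ^ 2) := by
    intro m
    induction m with
    | zero =>
      intro _
      constructor
      · simpa using Real.one_le_exp hθpos.le
      · simp
    | succ m ih =>
      intro hm
      obtain ⟨ih1, ih2⟩ := ih (by omega)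
      have hmn : (m : ℝ) ≤ (n : ℝ) := by exact_mod_cast (by omega : m ≤ n)
      set u : ℝ := θ + 2 * m * θ ^ 2 with hu
      have hu0 : 0 ≤ u := by positivity
      have hmθ : 2 * (m:ℝ) * θ ≤ 1 / 3 := by
        calc 2 * (m:ℝ) * θ ≤ 2 * ((n:ℝ) * θ) := by nlinarith
          _ = 1 / 3 := by rw [hnθ]; norm_num
      have hu1 : u ≤ 2 / 9 := by
        have : u = θ * (1 + 2 * m * θ) := by ring
        rw [this]
        calc θ * (1 + 2 * m * θ) ≤ (1/6) * (1 + 1/3) := by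
              apply mul_le_mul hθ6 (by linarith) (by positivity) (by norm_num)
          _ = 2 / 9 := by norm_num
      have husq : u ^ 2 ≤ 2 * θ ^ 2 := by
        have h1 : u = θ * (1 + 2 * m * θ) := by ring
        have h2 : (1 + 2 * (m:ℝ) * θ) ^ 2 ≤ 2 := by nlinarith [mul_nonneg (mul_nonneg (by norm_num : (0:ℝ) ≤ 2) (Nat.cast_nonneg m)) hθpos.le]
        calc u ^ 2 = θ ^ 2 * (1 + 2 * m * θ) ^ 2 := by rw [h1]; ring
          _ ≤ θ ^ 2 * 2 := by nlinarith [sq_nonneg θ]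
          _ = 2 * θ ^ 2 := by ring
      rw [Function.iterate_succ_apply']
      constructor
      · exact hf_one _ ih1
      · calc f (f^[m] (Real.exp θ)) ≤ f (Real.exp u) := by
              apply hf_mono _ _ ih1
              exact ih2
          _ ≤ Real.exp (u + u ^ 2) := hstep u hu0 (by linarith)
          _ ≤ Real.exp (θ + 2 * (m + 1 : ℕ) * θ ^ 2) := by
              apply Real.exp_le_exp.mpr
              push_cast
              nlinarith
  obtain ⟨h1n, h2n⟩ := hiter n le_rfl
  -- bound the moment generating function value
  have hmgf : (f^[n] (Real.exp θ)) ^ n ≤ Real.exp (2 / 9) := by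
    calc (f^[n] (Real.exp θ)) ^ n ≤ (Real.exp (θ + 2 * n * θ ^ 2)) ^ n := by
          apply pow_le_pow_left₀ (by linarith) h2n
      _ = Real.exp (n * (θ + 2 * n * θ ^ 2)) := by
          rw [← Real.exp_nat_mul]
      _ ≤ Real.exp (2 / 9) := by
          apply Real.exp_le_exp.mpr
          have : (n:ℝ) * (θ + 2 * n * θ ^ 2) = n * θ + 2 * (n * θ) ^ 2 := by ring
          rw [this, hnθ]
          norm_num
  -- Markov's inequality
  have hmarkov := mul_meas_ge_le_integral_of_nonneg
    (f := fun ω => Real.exp (S ω / (6 * n))) (μ := P)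
    (Filter.Eventually.of_forall fun ω => (Real.exp_pos _).le) hint (Real.exp (lam / 6))
  have hset : {x | Real.exp (lam / 6) ≤ Real.exp (S x / (6 * n))} = {ω | S ω ≥ lam * n} := by
    ext ω
    simp only [Set.mem_setOf_eq, Real.exp_le_exp, ge_iff_le]
    rw [le_div_iff₀ (by positivity)]
    have heq : lam / 6 * (6 * (n:ℝ)) = lam * n := by ring
    rw [heq]
  rw [hset] at hmarkov
  have hint_le : ∫ ω, Real.exp (S ω / (6 * n)) ∂P ≤ Real.exp (2 / 9) := by
    calc ∫ ω, Real.exp (S ω / (6 * n)) ∂P ≤ (f^[n] (Real.exp (1 / (6 * n)))) ^ n := hbound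
      _ = (f^[n] (Real.exp θ)) ^ n := by rw [hθ]
      _ ≤ Real.exp (2 / 9) := hmgf
  have hfinal : Real.exp (lam / 6) * (P {ω | S ω ≥ lam * n}).toReal ≤ Real.exp (2 / 9) :=
    hmarkov.trans hint_le
  have hexp : Real.exp (2 / 9 - lam / 6) = Real.exp (2 / 9) / Real.exp (lam / 6) := by
    rw [Real.exp_sub]
  rw [hexp, le_div_iff₀ (Real.exp_pos _)]
  linarith [hfinal]
end

section
/- Let n₀ ≥ 2 be an integer, f(s) = (s + n₀ - 1)^{n₀} / n₀^{n₀}, and define g : ℕ → ℝ → ℝ by g 0 s = s and g (n+1) s = s * f (g n s). Let (Ω, 𝓕, P) be a probability space, n ≥ 1 a natural number, θ_n = (1 + 2*n)^{-2}, and S : Ω → ℝ a measurable function such that ω ↦ Real.exp (θ_n * S ω) is integrable and ∫ Real.exp (θ_n * S ω) dP(ω) ≤ (g n (Real.exp θ_n))^n. Then for every real λ, P({ω | S ω ≥ λ*n^2}) ≤ Real.exp (n/(1 + 2*n) - λ*n^2/(1 + 2*n)^2). -/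
open MeasureTheory

/-- `exp a ≤ 1 + a + a²` for `0 ≤ a ≤ 1`. -/
lemma exp_le_one_add_add_sq {a : ℝ} (h0 : 0 ≤ a) (h1 : a ≤ 1) :
    Real.exp a ≤ 1 + a + a ^ 2 := by
  have habs : |a| ≤ 1 := by rwa [abs_of_nonneg h0]
  have hb := Real.exp_bound habs (n := 2) (by norm_num)
  have hsum : ∑ m ∈ Finset.range 2, a ^ m / (m.factorial : ℝ) = 1 + a := by
    simp [Finset.sum_range_succ]
  rw [hsum, abs_of_nonneg h0] at hb
  have h3 : Real.exp a - (1 + a) ≤ a ^ 2 * (3 / (2 * 2)) := by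
    calc Real.exp a - (1 + a) ≤ |Real.exp a - (1 + a)| := le_abs_self _
    _ ≤ a ^ 2 * ((2:ℕ).succ / ((2:ℕ).factorial * 2)) := hb
    _ = a ^ 2 * (3 / (2 * 2)) := by norm_num [Nat.factorial]
  nlinarith [sq_nonneg a]

/-- Chernoff-bound content of inequality (2.8) of Lemma 2.2: if
`E[e^{θ_n S}] ≤ g_n(e^{θ_n})^n` with `θ_n = (1+2n)⁻²`, where `g_n` is the
generating function of the total population up to generation `n` of the
critical Galton–Watson process with `Bin(n₀, 1/n₀)` offspring, then
`P(S ≥ λn²) ≤ exp(n/(1+2n) - λn²/(1+2n)²)`. -/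
theorem gw_total_sum_upper_tail
    (n₀ : ℕ) (hn₀ : 2 ≤ n₀)
    (f : ℝ → ℝ) (hf : ∀ s, f s = (s + n₀ - 1) ^ n₀ / n₀ ^ n₀)
    (g : ℕ → ℝ → ℝ) (hg0 : ∀ s, g 0 s = s)
    (hgs : ∀ n s, g (n + 1) s = s * f (g n s))
    {Ω : Type*} [MeasurableSpace Ω] (P : Measure Ω) [IsProbabilityMeasure P]
    (n : ℕ) (hn : 1 ≤ n) (θn : ℝ) (hθn : θn = ((1 : ℝ) + 2 * n) ^ (-2 : ℤ))
    (S : Ω → ℝ) (hS : Measurable S)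
    (hint : Integrable (fun ω => Real.exp (θn * S ω)) P)
    (hbound : ∫ ω, Real.exp (θn * S ω) ∂P ≤ (g n (Real.exp θn)) ^ n)
    (lam : ℝ) :
    (P {ω | S ω ≥ lam * n ^ 2}).toReal
      ≤ Real.exp (n / (1 + 2 * n) - lam * n ^ 2 / (1 + 2 * n) ^ 2) := by
  set M : ℝ := 1 + 2 * n with hM
  have hn1 : (1 : ℝ) ≤ n := by exact_mod_cast hn
  have hM3 : (3 : ℝ) ≤ M := by rw [hM]; linarith
  have hMpos : (0 : ℝ) < M := by linarith
  have hθ : θn = (M ^ 2)⁻¹ := by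
    rw [hθn, hM]
    rw [zpow_neg, zpow_two]
    ring_nf
  have hθpos : 0 < θn := by rw [hθ]; positivity
  have hn₀pos : (0 : ℝ) < n₀ := by positivity
  -- key induction
  have key : ∀ k, k ≤ n → 1 ≤ g k (Real.exp θn) ∧
      g k (Real.exp θn) ≤ Real.exp ((1 + 2 * k) * θn) := by
    intro k
    induction k with
    | zero =>
      intro _
      rw [hg0]
      constructor
      · exact Real.one_le_exp hθpos.le
      · apply Real.exp_le_exp.2
        push_cast; nlinarith
    | succ k ih =>
      intro hk
      obtain ⟨hx1, hx2⟩ := ih (le_trans (Nat.le_succ k) hk)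
      set x := g k (Real.exp θn) with hxdef
      set a : ℝ := (1 + 2 * k) * θn with ha
      have hk1 : (1 : ℝ) + 2 * k ≤ M := by
        rw [hM]
        have : (k : ℝ) ≤ n := by exact_mod_cast le_trans (Nat.le_succ k) hk
        linarith
      have ha0 : 0 ≤ a := by positivity
      have haM : a ≤ M⁻¹ := by
        rw [ha, hθ]
        rw [pow_two]
        rw [mul_inv]
        calc (1 + 2 * (k:ℝ)) * (M⁻¹ * M⁻¹) ≤ M * (M⁻¹ * M⁻¹) := by
              apply mul_le_mul_of_nonneg_right hk1; positivity
        _ = M⁻¹ := by field_simp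
      have ha1 : a ≤ 1 := le_trans haM (by
        rw [inv_le_one_iff₀]; right; linarith)
      have hasq : a ^ 2 ≤ θn := by
        rw [hθ]
        have h1 : a ^ 2 ≤ (M⁻¹) ^ 2 := by
          apply pow_le_pow_left₀ ha0 haM
        rw [inv_pow] at h1
        exact h1
      -- bounds on f x
      have hbase : (1 : ℝ) ≤ (x + n₀ - 1) / n₀ := by
        rw [le_div_iff₀ hn₀pos]; linarith
      have hfx_eq : f x = ((x + n₀ - 1) / n₀) ^ n₀ := by
        rw [hf, div_pow]
      have hfx1 : 1 ≤ f x := by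
        rw [hfx_eq]; exact one_le_pow₀ hbase
      have hfx_le : f x ≤ Real.exp (x - 1) := by
        rw [hfx_eq]
        have hb2 : (x + n₀ - 1) / n₀ ≤ Real.exp ((x - 1) / n₀) := by
          have := Real.add_one_le_exp ((x - 1) / n₀)
          have heq : (x + n₀ - 1) / n₀ = (x - 1) / n₀ + 1 := by
            field_simp; ring
          rw [heq]; exact this
        calc ((x + n₀ - 1) / n₀) ^ n₀ ≤ (Real.exp ((x - 1) / n₀)) ^ n₀ := by
              apply pow_le_pow_left₀ (by linarith) hb2
        _ = Real.exp (n₀ * ((x - 1) / n₀)) := by rw [Real.exp_nat_mul]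
        _ = Real.exp (x - 1) := by
              congr 1; field_simp
      constructor
      · rw [hgs]
        have : (1:ℝ) ≤ Real.exp θn := Real.one_le_exp hθpos.le
        nlinarith
      · rw [hgs]
        calc Real.exp θn * f x ≤ Real.exp θn * Real.exp (x - 1) := by
              apply mul_le_mul_of_nonneg_left hfx_le (Real.exp_nonneg _)
        _ = Real.exp (θn + (x - 1)) := by rw [← Real.exp_add]
        _ ≤ Real.exp ((1 + 2 * ↑(k + 1)) * θn) := by
              apply Real.exp_le_exp.2
              have hxa : x ≤ Real.exp a := hx2
              have hexp : Real.exp a ≤ 1 + a + a ^ 2 := exp_le_one_add_add_sq ha0 ha1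
              have : x - 1 ≤ a + θn := by nlinarith
              push_cast
              nlinarith
  obtain ⟨hg1, hg2⟩ := key n le_rfl
  have hgM : g n (Real.exp θn) ≤ Real.exp M⁻¹ := by
    refine le_trans hg2 (Real.exp_le_exp.2 ?_)
    rw [hθ, hM]
    rw [pow_two, mul_inv]
    calc (1 + 2 * (n:ℝ)) * ((1 + 2 * (n:ℝ))⁻¹ * (1 + 2 * (n:ℝ))⁻¹)
        = (1 + 2 * (n:ℝ))⁻¹ := by
          rw [hM] at hMpos; field_simp
    _ ≤ (1 + 2 * (n:ℝ))⁻¹ := le_rfl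
  have hpow : (g n (Real.exp θn)) ^ n ≤ Real.exp (n / M) := by
    calc (g n (Real.exp θn)) ^ n ≤ (Real.exp M⁻¹) ^ n :=
          pow_le_pow_left₀ (by linarith) hgM n
    _ = Real.exp (n * M⁻¹) := by rw [Real.exp_nat_mul]
    _ = Real.exp (n / M) := by rw [div_eq_mul_inv]
  have hmarkov := ProbabilityTheory.measure_ge_le_exp_mul_mgf (X := S) (μ := P)
    (t := θn) (lam * n ^ 2) hθpos.le hint
  have hmgf : ProbabilityTheory.mgf S P θn = ∫ ω, Real.exp (θn * S ω) ∂P := rfl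
  calc (P {ω | S ω ≥ lam * n ^ 2}).toReal
      = (P {ω | lam * n ^ 2 ≤ S ω}).toReal := rfl
  _ ≤ Real.exp (-θn * (lam * n ^ 2)) * ProbabilityTheory.mgf S P θn := hmarkov
  _ ≤ Real.exp (-θn * (lam * n ^ 2)) * Real.exp (n / M) := by
        apply mul_le_mul_of_nonneg_left _ (Real.exp_nonneg _)
        rw [hmgf]; exact le_trans hbound hpow
  _ = Real.exp (n / M - lam * n ^ 2 * θn) := by
        rw [← Real.exp_add]; ring_nf
  _ = Real.exp (↑n / (1 + 2 * ↑n) - lam * ↑n ^ 2 / (1 + 2 * ↑n) ^ 2) := by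
        congr 1
        rw [hθ, hM]
        ring
end

section
/- For every real p > 0 there exists a constant c₀ > 0 such that for every natural number n with 2*p ≤ n and every natural number k with 1 ≤ k and (k : ℝ) ≤ Real.sqrt n, one has (n.choose k : ℝ) * (p/n)^k * (1 - p/n)^(n - k) ≥ c₀ * (p/k)^k. -/
/-!
The point mass is `C(n,k) (p/n)^k (1 - p/n)^(n-k)`. The first two factors give at least `(p/k)^k`,
because `C(n,k) ≥ (n/k)^k`: compare `n^k k! = ∏ n (k-i)` with `k^k n(n-1)⋯(n-k+1) = ∏ k (n-i)`
factor by factor. The last factor is at least `e^{-2p}`, because `log (1 - x) ≥ -x/(1-x) ≥ -2x`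
for `0 ≤ x ≤ 1/2` and `n - k ≤ n`. Hence `c₀ = e^{-2p}` works.
-/

open Finset Real Nat

theorem Nat.pow_mul_factorial_le_pow_mul_descFactorial {n k : ℕ} (h : k ≤ n) :
    n ^ k * k ! ≤ k ^ k * n.descFactorial k := by
  calc n ^ k * k ! = ∏ i ∈ range k, n * (k - i) := by
        rw [prod_mul_distrib, prod_const, card_range, ← descFactorial_self,
          descFactorial_eq_prod_range]
    _ ≤ ∏ i ∈ range k, k * (n - i) := prod_le_prod' fun i _ => by
        rw [Nat.mul_sub, Nat.mul_sub, Nat.mul_comm k n]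
        exact Nat.sub_le_sub_left (Nat.mul_le_mul_right i h) _
    _ = k ^ k * n.descFactorial k := by
        rw [prod_mul_distrib, prod_const, card_range, descFactorial_eq_prod_range]

theorem Nat.pow_le_pow_mul_choose {n k : ℕ} (h : k ≤ n) : n ^ k ≤ k ^ k * n.choose k := by
  have := Nat.pow_mul_factorial_le_pow_mul_descFactorial h
  rw [Nat.descFactorial_eq_factorial_mul_choose, Nat.mul_left_comm, Nat.mul_comm (k !)] at this
  exact Nat.le_of_mul_le_mul_right this k.factorial_pos

theorem div_pow_le_choose_mul_div_pow {p : ℝ} (hp : 0 ≤ p) {n k : ℕ} (h : k ≤ n) :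
    (p / k) ^ k ≤ n.choose k * (p / n) ^ k := by
  rcases k.eq_zero_or_pos with rfl | hk
  · simp
  have hk' : (0 : ℝ) < k := by exact_mod_cast hk
  have hn : (0 : ℝ) < n := by exact_mod_cast hk.trans_le h
  rw [div_pow, div_pow, mul_div_assoc', div_le_div_iff₀ (by positivity) (by positivity),
    mul_right_comm, mul_comm (p ^ k), mul_comm _ (k ^ k : ℝ)]
  exact mul_le_mul_of_nonneg_right (by exact_mod_cast Nat.pow_le_pow_mul_choose h) (by positivity)

theorem Real.exp_neg_two_mul_le_one_sub {x : ℝ} (hx₀ : 0 ≤ x) (hx : x ≤ 1 / 2) :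
    exp (-(2 * x)) ≤ 1 - x := by
  have hpos : 0 < 1 - x := by linarith
  have hinv : (1 - x)⁻¹ ≤ 1 + 2 * x := by
    rw [inv_le_iff_one_le_mul₀ hpos]; nlinarith
  calc exp (-(2 * x)) ≤ exp (log (1 - x)) :=
        exp_le_exp.2 <| by linarith [one_sub_inv_le_log_of_pos hpos]
    _ = 1 - x := exp_log hpos

theorem exp_neg_two_mul_le_one_sub_div_pow {p : ℝ} (hp : 0 ≤ p) {n m : ℕ} (hpn : 2 * p ≤ n)
    (hm : m ≤ n) : exp (-(2 * p)) ≤ (1 - p / n) ^ m := by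
  rcases n.eq_zero_or_pos with rfl | hn
  · obtain rfl : m = 0 := Nat.le_zero.1 hm
    simpa using hp
  have hn' : (0 : ℝ) < n := by exact_mod_cast hn
  have hm' : (m : ℝ) ≤ n := by exact_mod_cast hm
  calc exp (-(2 * p)) ≤ exp (-(2 * (p / n))) ^ m := by
        rw [← exp_nat_mul, exp_le_exp, mul_neg, neg_le_neg_iff, mul_left_comm, mul_div_assoc']
        gcongr 2 * ?_
        rw [div_le_iff₀ hn']
        nlinarith
    _ ≤ (1 - p / n) ^ m := pow_le_pow_left₀ (exp_pos _).le
        (exp_neg_two_mul_le_one_sub (by positivity) (by rw [div_le_iff₀ hn']; linarith)) m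

/-- Inequality (2.18): for a `Bin(n, p/n)` random variable `W`,
`P(W = k) ≥ c₀ (p/k)^k = c₀ e^{-k log(k/p)}` for `1 ≤ k ≤ √n`. -/
theorem binomial_point_mass_lower_bound
    (p : ℝ) (hp : 0 < p) :
    ∃ c₀ : ℝ, 0 < c₀ ∧ ∀ n : ℕ, 2 * p ≤ n → ∀ k : ℕ, 1 ≤ k → (k : ℝ) ≤ Real.sqrt n →
      (n.choose k : ℝ) * (p / n) ^ k * (1 - p / n) ^ (n - k) ≥ c₀ * (p / k) ^ k := by
  refine ⟨exp (-(2 * p)), exp_pos _, fun n hpn k _ hk => ?_⟩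
  have hkn : k ≤ n := by
    have hk2 : (k : ℝ) ^ 2 ≤ n := (Real.le_sqrt k.cast_nonneg n.cast_nonneg).1 hk
    exact Nat.le_self_pow two_ne_zero k |>.trans (by exact_mod_cast hk2)
  rw [ge_iff_le, mul_comm]
  exact mul_le_mul (div_pow_le_choose_mul_div_pow hp.le hkn)
    (exp_neg_two_mul_le_one_sub_div_pow hp.le hpn (n.sub_le k)) (exp_pos _).le (by positivity)
end

section
/- Let V be a finite type and μ : V → V → ℝ a symmetric function with 0 ≤ μ x y for all x, y, and define the Dirichlet energy E(f) = (1/2) * ∑_{x ∈ V} ∑_{y ∈ V} μ x y * (f x - f y)^2. Fix x, y ∈ V with x ≠ y and let ρ = ⨅_{g : V → ℝ, g x = 1, g y = 0} E(g) (an infimum of real numbers over a nonempty set bounded below by 0). Then for every f : V → ℝ, (f x - f y)^2 * ρ ≤ E(f). -/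
/-! Normalizing `f` to the potential `g = (f - f y) / (f x - f y)`, which is admissible for
the infimum, costs a factor `(f x - f y)⁻²` in energy, because the energy is invariant under
adding constants and scales quadratically. -/

open Finset

noncomputable def dirichletEnergy {V : Type*} [Fintype V] (μ : V → V → ℝ) (f : V → ℝ) : ℝ :=
  (1 / 2) * ∑ x, ∑ y, μ x y * (f x - f y) ^ 2

section DirichletEnergy

variable {V : Type*} [Fintype V] (μ : V → V → ℝ)

theorem dirichletEnergy_nonneg (hμ : ∀ x y, 0 ≤ μ x y) (f : V → ℝ) :
    0 ≤ dirichletEnergy μ f :=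
  mul_nonneg (by norm_num) <| sum_nonneg fun a _ ↦ sum_nonneg fun b _ ↦
    mul_nonneg (hμ a b) (sq_nonneg _)

theorem dirichletEnergy_mul_add_const (a b : ℝ) (f : V → ℝ) :
    dirichletEnergy μ (fun v ↦ a * f v + b) = a ^ 2 * dirichletEnergy μ f := by
  simp only [dirichletEnergy, mul_sum]
  refine sum_congr rfl fun u _ ↦ sum_congr rfl fun v _ ↦ ?_
  ring

theorem sq_sub_mul_le_dirichletEnergy {x y : V} {ρ : ℝ} (hμ : ∀ x y, 0 ≤ μ x y)
    (hρ : ∀ g : V → ℝ, g x = 1 → g y = 0 → ρ ≤ dirichletEnergy μ g) (f : V → ℝ) :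
    (f x - f y) ^ 2 * ρ ≤ dirichletEnergy μ f := by
  set c := f x - f y
  rcases eq_or_ne c 0 with hc | hc
  · simpa [hc] using dirichletEnergy_nonneg μ hμ f
  have hg := hρ (fun v ↦ c⁻¹ * f v + -c⁻¹ * f y) (by field_simp; ring) (by ring)
  rw [dirichletEnergy_mul_add_const, inv_pow] at hg
  calc c ^ 2 * ρ ≤ c ^ 2 * ((c ^ 2)⁻¹ * dirichletEnergy μ f) := by gcongr
    _ = dirichletEnergy μ f := by field_simp

end DirichletEnergy

theorem effective_resistance_inequality_general
    {V : Type*} [Fintype V] (μ : V → V → ℝ)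
    (hnonneg : ∀ x y, 0 ≤ μ x y)
    (E : (V → ℝ) → ℝ)
    (hE : ∀ f, E f = (1 / 2) * ∑ x, ∑ y, μ x y * (f x - f y) ^ 2)
    (x y : V)
    (ρ : ℝ) (hρ : ρ = ⨅ g : {g : V → ℝ // g x = 1 ∧ g y = 0}, E g.1) :
    ∀ f : V → ℝ, (f x - f y) ^ 2 * ρ ≤ E f := by
  obtain rfl : E = dirichletEnergy μ := funext hE
  have hbdd : BddBelow (Set.range fun g : {g : V → ℝ // g x = 1 ∧ g y = 0} ↦
      dirichletEnergy μ g.1) :=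
    ⟨0, Set.forall_mem_range.2 fun g ↦ dirichletEnergy_nonneg μ hnonneg g.1⟩
  exact sq_sub_mul_le_dirichletEnergy μ hnonneg fun g hgx hgy ↦
    hρ ▸ ciInf_le hbdd ⟨g, hgx, hgy⟩

/-- Lemma 3.1, first assertion: `|f(x) - f(y)|² ≤ R(x,y) E(f,f)`, stated in the
form `|f(x) - f(y)|² ⋅ R(x,y)⁻¹ ≤ E(f,f)` where `R(x,y)⁻¹ = ρ` is the infimum
of the energies of potentials `g` with `g x = 1`, `g y = 0`. -/
theorem effective_resistance_inequality
    {V : Type*} [Fintype V] (μ : V → V → ℝ)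
    (hsym : ∀ x y, μ x y = μ y x) (hnonneg : ∀ x y, 0 ≤ μ x y)
    (E : (V → ℝ) → ℝ)
    (hE : ∀ f, E f = (1 / 2) * ∑ x, ∑ y, μ x y * (f x - f y) ^ 2)
    (x y : V) (hxy : x ≠ y)
    (ρ : ℝ) (hρ : ρ = ⨅ g : {g : V → ℝ // g x = 1 ∧ g y = 0}, E g.1) :
    ∀ f : V → ℝ, (f x - f y) ^ 2 * ρ ≤ E f :=
  effective_resistance_inequality_general μ hnonneg E hE x y ρ hρ
end

section
/- Let V be a finite type and μ : V → V → ℝ a symmetric function with 0 ≤ μ x y for all x, y, and define the Dirichlet energy E(f) = (1/2) * ∑_{x ∈ V} ∑_{y ∈ V} μ x y * (f x - f y)^2. Fix x, y ∈ V with x ≠ y. Then there exists f : V → ℝ with f x = 1 and f y = 0 such that E(f) ≤ E(g) for every g : V → ℝ with g x = 1 and g y = 0; i.e. the infimum defining the effective resistance between x and y is attained. -/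
/-- Lemma 3.1, second assertion: the infimum defining the effective resistance
between `x` and `y` is attained. -/
theorem effective_resistance_attained
    {V : Type*} [Fintype V] (μ : V → V → ℝ)
    (hsym : ∀ x y, μ x y = μ y x) (hnonneg : ∀ x y, 0 ≤ μ x y)
    (E : (V → ℝ) → ℝ)
    (hE : ∀ f, E f = (1 / 2) * ∑ x, ∑ y, μ x y * (f x - f y) ^ 2)
    (x y : V) (hxy : x ≠ y) :
    ∃ f : V → ℝ, f x = 1 ∧ f y = 0 ∧
      ∀ g : V → ℝ, g x = 1 → g y = 0 → E f ≤ E g := by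
  classical
  set clamp : ℝ → ℝ := fun a => min 1 (max 0 a) with hclamp
  have clamp_lip : ∀ a b : ℝ, |clamp a - clamp b| ≤ |a - b| := by
    intro a b
    calc |clamp a - clamp b| ≤ max |(1:ℝ) - 1| |max 0 a - max 0 b| :=
          abs_min_sub_min_le_max 1 (max 0 a) 1 (max 0 b)
      _ = |max 0 a - max 0 b| := by rw [sub_self, abs_zero, max_eq_right (abs_nonneg _)]
      _ ≤ |a - b| := by simpa [max_comm] using abs_max_sub_max_le_abs a b 0
  have clamp_sq : ∀ a b : ℝ, (clamp a - clamp b) ^ 2 ≤ (a - b) ^ 2 := by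
    intro a b
    rw [← sq_abs (clamp a - clamp b), ← sq_abs (a - b)]
    exact pow_le_pow_left₀ (abs_nonneg _) (clamp_lip a b) 2
  have hEle : ∀ g : V → ℝ, E (fun v => clamp (g v)) ≤ E g := by
    intro g
    rw [hE, hE]
    apply mul_le_mul_of_nonneg_left _ (by norm_num)
    apply Finset.sum_le_sum
    intro a _
    apply Finset.sum_le_sum
    intro b _
    exact mul_le_mul_of_nonneg_left (clamp_sq (g a) (g b)) (hnonneg a b)
  -- compact constraint set
  set K : Set (V → ℝ) :=
    (Set.univ.pi fun _ : V => Set.Icc (0:ℝ) 1) ∩ ({f | f x = 1} ∩ {f | f y = 0})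
    with hK
  have hKc : IsCompact K := by
    apply IsCompact.inter_right
    · exact isCompact_univ_pi fun _ => isCompact_Icc
    · exact ((isClosed_eq (continuous_apply x) continuous_const).inter
        (isClosed_eq (continuous_apply y) continuous_const))
  have hKne : K.Nonempty := by
    refine ⟨fun v => if v = x then 1 else 0, ?_, ?_, ?_⟩
    · intro v _
      by_cases h : v = x <;> simp [h]
    · simp
    · simp [hxy.symm]
  have hEc : Continuous E := by
    have : E = fun f => (1 / 2) * ∑ x, ∑ y, μ x y * (f x - f y) ^ 2 := funext hE
    rw [this]
    refine continuous_const.mul (continuous_finset_sum _ fun a _ => continuous_finset_sum _ fun b _ => ?_)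
    exact continuous_const.mul (((continuous_apply a).sub (continuous_apply b)).pow 2)
  obtain ⟨f, hfK, hfmin⟩ := hKc.exists_isMinOn hKne hEc.continuousOn
  obtain ⟨hf01, hfx, hfy⟩ := hfK
  refine ⟨f, hfx, hfy, ?_⟩
  intro g hgx hgy
  have hmem : (fun v => clamp (g v)) ∈ K := by
    refine ⟨?_, ?_, ?_⟩
    · intro v _
      constructor
      · exact le_min zero_le_one (le_max_left 0 (g v))
      · exact min_le_left _ _
    · simp [hclamp, hgx]
    · simp [hclamp, hgy]
  exact (hfmin hmem).trans (hEle g)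
end

section
/- Let G be a connected simple graph on a finite vertex type V, and define the energy of f : V → ℝ by E_G(f) = (1/2) * ∑_{x ∈ V} ∑_{y ∈ V} w(x,y) * (f x - f y)^2, where w(x,y) = 1 if x and y are adjacent in G and 0 otherwise. Then for all x, y ∈ V and all f : V → ℝ, (f x - f y)^2 ≤ (G.dist x y : ℝ) * E_G(f). -/
open SimpleGraph Finset

private lemma list_sq_sum_le (l : List ℝ) :
    (l.sum) ^ 2 ≤ (l.length : ℝ) * (l.map (· ^ 2)).sum := by
  induction l with
  | nil => simp
  | cons a l ih =>
    simp only [List.sum_cons, List.map_cons, List.length_cons]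
    push_cast
    have hq : 0 ≤ (l.map (· ^ 2)).sum := by
      apply List.sum_nonneg
      intro x hx
      obtain ⟨y, _, rfl⟩ := List.mem_map.mp hx
      positivity
    have hn : (0 : ℝ) ≤ l.length := Nat.cast_nonneg _
    set n : ℝ := (l.length : ℝ)
    set q : ℝ := (l.map (· ^ 2)).sum
    set s : ℝ := l.sum
    rcases eq_or_lt_of_le hn with h0 | h0
    · have hs : s = 0 := by nlinarith [sq_nonneg s]
      have hexp : (a + s) ^ 2 = a ^ 2 := by rw [hs]; ring
      rw [hexp, ← h0]
      nlinarith
    · have key : 2 * a * s ≤ n * a ^ 2 + q := by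
        nlinarith [sq_nonneg (n * a - s)]
      nlinarith [key, ih]

private lemma walk_telescope {V : Type*} {G : SimpleGraph V} {u v : V} (f : V → ℝ)
    (p : G.Walk u v) :
    (p.darts.map (fun d => f d.fst - f d.snd)).sum = f u - f v := by
  induction p with
  | nil => simp
  | cons h p ih =>
    rw [SimpleGraph.Walk.darts_cons, List.map_cons, List.sum_cons, ih]
    ring

/-- Section 3: for a connected graph with natural weights, the effective
resistance is bounded by the graph distance, i.e.
`|f(x) - f(y)|² ≤ d(x,y) E(f,f)`. -/
theorem sq_diff_le_dist_mul_energy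
    {V : Type*} [Fintype V] (G : SimpleGraph V) [DecidableRel G.Adj]
    (hconn : G.Connected)
    (E : (V → ℝ) → ℝ)
    (hE : ∀ f, E f = (1 / 2) * ∑ x, ∑ y,
      (if G.Adj x y then (1 : ℝ) else 0) * (f x - f y) ^ 2)
    (x y : V) (f : V → ℝ) :
    (f x - f y) ^ 2 ≤ (G.dist x y : ℝ) * E f := by
  classical
  obtain ⟨p, hpath, hlen⟩ := hconn.exists_path_of_dist x y
  set t : V × V → ℝ := fun z => (if G.Adj z.1 z.2 then (1 : ℝ) else 0) * (f z.1 - f z.2) ^ 2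
    with ht
  have ht_nonneg : ∀ z : V × V, 0 ≤ t z := by
    intro z
    rw [ht]
    dsimp only
    split <;> simp [sq_nonneg]
  -- darts are nodup
  have hdn : p.darts.Nodup := Walk.darts_nodup_of_support_nodup hpath.support_nodup
  have hen : p.edges.Nodup := hpath.isTrail.edges_nodup
  -- the two finsets of ordered pairs coming from the darts
  set L1 : List (V × V) := p.darts.map Dart.toProd with hL1
  set L2 : List (V × V) := p.darts.map (fun d => d.toProd.swap) with hL2
  have hL1n : L1.Nodup := hdn.map Dart.toProd_injective
  have hL2n : L2.Nodup := hdn.map (Prod.swap_injective.comp Dart.toProd_injective)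
  have hdisj : Disjoint L1.toFinset L2.toFinset := by
    rw [Finset.disjoint_left]
    intro z hz1 hz2
    rw [List.mem_toFinset, hL1, List.mem_map] at hz1
    rw [List.mem_toFinset, hL2, List.mem_map] at hz2
    obtain ⟨d1, hd1, hd1e⟩ := hz1
    obtain ⟨d2, hd2, hd2e⟩ := hz2
    have hedge : d1.edge = d2.edge := by
      rw [Dart.edge, Dart.edge, hd1e, ← hd2e]
      exact (Sym2.mk_prod_swap_eq).symm
    have : d1 = d2 := by
      have := List.inj_on_of_nodup_map (f := Dart.edge) (l := p.darts)
        (by rw [← Walk.edges]; exact hen)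
      exact this hd1 hd2 hedge
    subst this
    have hps : d1.toProd = d1.toProd.swap := hd1e.trans hd2e.symm
    exact d1.fst_ne_snd (by simpa using congrArg Prod.fst hps)
  -- total sum over all ordered pairs
  have hfull : (∑ a, ∑ b, t (a, b)) = ∑ z : V × V, t z := by
    rw [← Fintype.sum_prod_type]
  -- sum over the union is bounded by the full sum
  have hsub : L1.toFinset ∪ L2.toFinset ⊆ (Finset.univ : Finset (V × V)) :=
    Finset.subset_univ _
  have hle : ∑ z ∈ L1.toFinset ∪ L2.toFinset, t z ≤ ∑ z : V × V, t z :=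
    Finset.sum_le_sum_of_subset_of_nonneg hsub (fun z _ _ => ht_nonneg z)
  -- compute the sum over the union
  have hsum1 : ∑ z ∈ L1.toFinset, t z
      = (p.darts.map (fun d => (f d.fst - f d.snd) ^ 2)).sum := by
    rw [List.sum_toFinset _ hL1n, hL1, List.map_map]
    congr 1
    apply List.map_congr_left
    intro d _
    simp only [Function.comp, ht]
    rw [if_pos d.adj, one_mul]
  have hsum2 : ∑ z ∈ L2.toFinset, t z
      = (p.darts.map (fun d => (f d.fst - f d.snd) ^ 2)).sum := by
    rw [List.sum_toFinset _ hL2n, hL2, List.map_map]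
    congr 1
    apply List.map_congr_left
    intro d _
    simp only [Function.comp, ht, Prod.fst_swap, Prod.snd_swap]
    rw [if_pos d.adj.symm, one_mul]
    ring
  set S : ℝ := (p.darts.map (fun d => (f d.fst - f d.snd) ^ 2)).sum with hS
  have hunion : ∑ z ∈ L1.toFinset ∪ L2.toFinset, t z = 2 * S := by
    rw [Finset.sum_union hdisj, hsum1, hsum2]; ring
  -- hence S ≤ E f
  have hSE : S ≤ E f := by
    have hEf : E f = (1 / 2) * ∑ z : V × V, t z := by
      rw [hE f, hfull]
    rw [hEf]
    have : 2 * S ≤ ∑ z : V × V, t z := by rw [← hunion]; exact hle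
    linarith
  -- Cauchy-Schwarz along the path
  set l : List ℝ := p.darts.map (fun d => f d.fst - f d.snd) with hl
  have hCS : (f x - f y) ^ 2 ≤ (p.length : ℝ) * S := by
    have h1 := list_sq_sum_le l
    rw [hl, walk_telescope f p] at h1
    have hlen' : (p.darts.map (fun d => f d.fst - f d.snd)).length = p.length := by
      rw [List.length_map, Walk.length_darts]
    rw [hlen'] at h1
    have h2 : ((p.darts.map (fun d => f d.fst - f d.snd)).map (· ^ 2)).sum = S := by
      rw [hS, List.map_map]; rfl
    rw [h2] at h1
    exact h1
  have hEnn : 0 ≤ S := by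
    rw [hS]
    apply List.sum_nonneg
    intro a ha
    obtain ⟨d, _, rfl⟩ := List.mem_map.mp ha
    positivity
  calc (f x - f y) ^ 2 ≤ (p.length : ℝ) * S := hCS
    _ ≤ (p.length : ℝ) * E f := by
        apply mul_le_mul_of_nonneg_left hSE (Nat.cast_nonneg _)
    _ = (G.dist x y : ℝ) * E f := by rw [hlen]
end

section
/- Let G be a simple graph on a finite vertex type V such that G is a tree (connected and acyclic), and define the energy of f : V → ℝ by E_G(f) = (1/2) * ∑_{x ∈ V} ∑_{y ∈ V} w(x,y) * (f x - f y)^2, where w(x,y) = 1 if x and y are adjacent in G and 0 otherwise. Fix x, y ∈ V with x ≠ y and let d = G.dist x y. Then there exists f : V → ℝ with f x = 1, f y = 0 and E_G(f) = 1/(d : ℝ), and moreover every g : V → ℝ with g x = 1 and g y = 0 satisfies 1/(d : ℝ) ≤ E_G(g). In particular the effective resistance R(x,y) = (inf{E_G(g) : g x = 1, g y = 0})^{-1} equals the graph distance d(x,y). -/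
/-!
Lower bound: along a shortest path `x = v₀, …, v_d = y` the increments `g vᵢ - g vᵢ₊₁` sum to
`1`, so by Cauchy–Schwarz their squares, which sit on distinct edges, sum to at least `1 / d`.

Upper bound: every edge of a tree is a bridge, so deleting an edge `e` of the path splits the
vertices into the side of `x` and the side of `y`. Counting, for each vertex `v`, the path edges
whose deletion leaves `v` on the side of `x` and dividing by `d` gives a potential that is `1` at
`x`, `0` at `y`, jumps by `1 / d` across each of the `d` path edges and is constant across every
other edge; its energy is `d * (1 / d) ^ 2 = 1 / d`.
-/

open Finset

namespace SimpleGraph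

variable {V : Type*} {G : SimpleGraph V}

def edgeEnergy (g : V → ℝ) : Sym2 V → ℝ :=
  Sym2.lift ⟨fun u v => (g u - g v) ^ 2, fun u v => by ring⟩

@[simp]
theorem edgeEnergy_mk (g : V → ℝ) (u v : V) : edgeEnergy g s(u, v) = (g u - g v) ^ 2 := rfl

theorem edgeEnergy_nonneg (g : V → ℝ) (e : Sym2 V) : 0 ≤ edgeEnergy g e := by
  induction e with | h u v => exact sq_nonneg _

theorem edgeEnergy_div_const (g : V → ℝ) (c : ℝ) (e : Sym2 V) :
    edgeEnergy (fun v => g v / c) e = edgeEnergy g e / c ^ 2 := by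
  induction e with | h u v => rw [edgeEnergy_mk, edgeEnergy_mk, div_sub_div_same, div_pow]

theorem Walk.sum_darts_sub {A : Type*} [AddCommGroup A] {u v : V} (p : G.Walk u v) (g : V → A) :
    (p.darts.map fun d => g d.fst - g d.snd).sum = g u - g v := by
  induction p with
  | nil => simp
  | cons _ _ ih => simp [ih]

theorem reachable_deleteEdges_iff_of_adj_of_ne {u v w : V} {e : Sym2 V} (huv : G.Adj u v)
    (he : e ≠ s(u, v)) :
    (G.deleteEdges {e}).Reachable u w ↔ (G.deleteEdges {e}).Reachable v w := by
  have hadj : (G.deleteEdges {e}).Adj u v := by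
    rw [deleteEdges_adj]
    exact ⟨huv, fun h => he (Set.mem_singleton_iff.mp h).symm⟩
  exact ⟨hadj.reachable.symm.trans, hadj.reachable.trans⟩

theorem Reachable.deleteEdges_or {u v w : V} (huv : G.Adj u v) (hwu : G.Reachable w u) :
    (G.deleteEdges {s(u, v)}).Reachable w u ∨ (G.deleteEdges {s(u, v)}).Reachable w v := by
  obtain ⟨q⟩ := hwu
  induction q with
  | nil => exact Or.inl .rfl
  | @cons a b u hab _ ih =>
    by_cases he : s(a, b) = s(u, v)
    · rcases Sym2.eq_iff.mp he with ⟨rfl, -⟩ | ⟨rfl, -⟩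
      · exact Or.inl .rfl
      · exact Or.inr .rfl
    · simpa only [reachable_deleteEdges_iff_of_adj_of_ne hab (Ne.symm he)] using ih huv

theorem IsAcyclic.not_reachable_deleteEdges_of_mem_edges (hG : G.IsAcyclic) {u v : V}
    {p : G.Walk u v} (hp : p.IsPath) {e : Sym2 V} (he : e ∈ p.edges) :
    ¬ (G.deleteEdges {e}).Reachable u v := by
  classical
  rintro ⟨q⟩
  have hq : (q.bypass.mapLe (deleteEdges_le _)).IsPath := q.bypass_isPath.mapLe _
  have hpq : p = q.bypass.mapLe (deleteEdges_le _) :=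
    congrArg Subtype.val ((hG.subsingleton_path u v).elim ⟨p, hp⟩ ⟨_, hq⟩)
  rw [hpq, Walk.edges_mapLe_eq_edges] at he
  simpa using q.bypass.edges_subset_edgeSet he

theorem IsTree.reachable_deleteEdges_iff_not (hG : G.IsTree) {u v : V} (huv : G.Adj u v)
    (w : V) :
    (G.deleteEdges {s(u, v)}).Reachable u w ↔ ¬ (G.deleteEdges {s(u, v)}).Reachable v w :=
  ⟨fun hu hv => hG.isAcyclic.not_reachable_deleteEdges_of_mem_edges (Adj.isPath_toWalk huv)
      (by simp) (hu.trans hv.symm),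
    fun hv => (((hG.connected w u).deleteEdges_or huv).resolve_right (mt .symm hv)).symm⟩

open Classical in
noncomputable def cutPotential (G : SimpleGraph V) (x : V) (S : Finset (Sym2 V)) (v : V) : ℝ :=
  ∑ e ∈ S, if (G.deleteEdges {e}).Reachable v x then 1 else 0

theorem cutPotential_self (x : V) (S : Finset (Sym2 V)) : G.cutPotential x S x = #S := by
  simp [cutPotential]

theorem IsAcyclic.cutPotential_eq_zero (hG : G.IsAcyclic) {x y : V} {p : G.Walk x y}
    (hp : p.IsPath) {S : Finset (Sym2 V)} (hS : ∀ e ∈ S, e ∈ p.edges) :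
    G.cutPotential x S y = 0 :=
  sum_eq_zero fun e he =>
    if_neg fun h => hG.not_reachable_deleteEdges_of_mem_edges hp (hS e he) h.symm

theorem IsTree.sq_cutPotential_sub [DecidableEq V] (hG : G.IsTree) (x : V)
    (S : Finset (Sym2 V)) {u v : V} (huv : G.Adj u v) :
    (G.cutPotential x S u - G.cutPotential x S v) ^ 2 = if s(u, v) ∈ S then 1 else 0 := by
  classical
  set side : Sym2 V → V → ℝ := fun e w => if (G.deleteEdges {e}).Reachable w x then 1 else 0
  have hsub : G.cutPotential x S u - G.cutPotential x S v =
      ∑ e ∈ S, if e = s(u, v) then side e u - side e v else 0 := by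
    rw [cutPotential, cutPotential, ← sum_sub_distrib]
    refine sum_congr rfl fun e _ => ?_
    by_cases he : e = s(u, v)
    · rw [if_pos he]
    · simp only [if_neg he, if_congr (reachable_deleteEdges_iff_of_adj_of_ne huv he) rfl rfl,
        sub_self]
  rw [hsub, sum_ite_eq']
  split_ifs
  · by_cases hu : (G.deleteEdges {s(u, v)}).Reachable u x
    · simp [side, hu, (hG.reachable_deleteEdges_iff_not huv x).mp hu]
    · simp [side, hu, not_not.mp (mt (hG.reachable_deleteEdges_iff_not huv x).mpr hu)]
  · simp

section Finite

variable [Fintype V] [DecidableRel G.Adj]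

theorem sum_sum_ite_adj_eq_sum_darts {M : Type*} [AddCommMonoid M] (h : V → V → M) :
    ∑ u, ∑ v, (if G.Adj u v then h u v else 0) = ∑ d : G.Dart, h d.fst d.snd := by
  rw [← Fintype.sum_prod_type']
  refine (Fintype.sum_of_injective Dart.toProd Dart.toProd_injective _ _ ?_ ?_).symm
  · rintro ⟨u, v⟩ huv
    exact if_neg fun hadj => huv ⟨⟨(u, v), hadj⟩, rfl⟩
  · intro d
    exact (if_pos d.adj).symm

variable [DecidableEq V]

theorem sum_darts_eq_two_nsmul_sum_edgeFinset {M : Type*} [AddCommMonoid M]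
    (h : V → V → M) (hsymm : ∀ u v, h u v = h v u) :
    ∑ d : G.Dart, h d.fst d.snd = 2 • ∑ e ∈ G.edgeFinset, Sym2.lift ⟨h, hsymm⟩ e := by
  rw [← sum_fiberwise_of_maps_to (t := G.edgeFinset) (g := Dart.edge)
    (fun d _ => mem_edgeFinset.mpr d.edge_mem), smul_sum]
  refine sum_congr rfl fun e he => ?_
  have hfiber (d : G.Dart) (hd : d ∈ ({d | d.edge = e} : Finset G.Dart)) :
      h d.fst d.snd = Sym2.lift ⟨h, hsymm⟩ e := by
    rw [← (mem_filter.mp hd).2]; rfl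
  rw [sum_congr rfl hfiber, sum_const, G.dart_edge_fiber_card e (mem_edgeFinset.mp he)]

theorem half_sum_sum_adj_mul_sq_sub_eq_sum_edgeEnergy (g : V → ℝ) :
    1 / 2 * ∑ u, ∑ v, (if G.Adj u v then (1 : ℝ) else 0) * (g u - g v) ^ 2 =
      ∑ e ∈ G.edgeFinset, edgeEnergy g e := by
  simp only [ite_mul, one_mul, zero_mul]
  rw [sum_sum_ite_adj_eq_sum_darts,
    sum_darts_eq_two_nsmul_sum_edgeFinset (fun u v => (g u - g v) ^ 2) fun u v => by ring,
    nsmul_eq_mul, edgeEnergy]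
  ring

theorem Walk.IsTrail.sq_sub_le_length_mul_sum_edgeEnergy {u v : V} {p : G.Walk u v}
    (hp : p.IsTrail) (g : V → ℝ) :
    (g u - g v) ^ 2 ≤ p.length * ∑ e ∈ G.edgeFinset, edgeEnergy g e := by
  have hdarts : p.darts.Nodup := hp.edges_nodup.of_map _
  calc (g u - g v) ^ 2 = (∑ d ∈ p.darts.toFinset, (g d.fst - g d.snd)) ^ 2 := by
        rw [List.sum_toFinset _ hdarts, p.sum_darts_sub]
    _ ≤ #p.darts.toFinset * ∑ d ∈ p.darts.toFinset, (g d.fst - g d.snd) ^ 2 :=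
        sq_sum_le_card_mul_sum_sq
    _ = p.length * ∑ e ∈ p.edges.toFinset, edgeEnergy g e := by
        rw [List.toFinset_card_of_nodup hdarts, p.length_darts, List.sum_toFinset _ hdarts,
          List.sum_toFinset _ hp.edges_nodup, Walk.edges, List.map_map]
        rfl
    _ ≤ p.length * ∑ e ∈ G.edgeFinset, edgeEnergy g e := by
        refine mul_le_mul_of_nonneg_left (sum_le_sum_of_subset_of_nonneg (fun e he => ?_)
          fun e _ _ => edgeEnergy_nonneg g e) (Nat.cast_nonneg _)
        exact mem_edgeFinset.mpr (p.edges_subset_edgeSet (List.mem_toFinset.mp he))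

theorem Walk.IsTrail.one_div_length_le_sum_edgeEnergy {x y : V} {p : G.Walk x y}
    (hp : p.IsTrail) {g : V → ℝ} (hx : g x = 1) (hy : g y = 0) :
    1 / p.length ≤ ∑ e ∈ G.edgeFinset, edgeEnergy g e := by
  have h := hp.sq_sub_le_length_mul_sum_edgeEnergy g
  rw [hx, hy] at h
  have hpos : (0 : ℝ) < p.length :=
    (Nat.cast_nonneg _).lt_of_ne fun h0 => by norm_num [← h0] at h
  rw [div_le_iff₀ hpos]
  linarith

theorem IsTree.sum_edgeEnergy_cutPotential (hG : G.IsTree) (x : V) {S : Finset (Sym2 V)}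
    (hS : S ⊆ G.edgeFinset) :
    ∑ e ∈ G.edgeFinset, edgeEnergy (G.cutPotential x S) e = #S := by
  calc ∑ e ∈ G.edgeFinset, edgeEnergy (G.cutPotential x S) e
      = ∑ e ∈ G.edgeFinset, if e ∈ S then 1 else 0 := sum_congr rfl fun e he => by
        induction e with | h u v => exact hG.sq_cutPotential_sub x S (mem_edgeFinset.mp he)
    _ = #S := by rw [sum_boole, filter_mem_eq_inter, inter_eq_right.mpr hS]

theorem IsTree.exists_sum_edgeEnergy_eq_one_div_length (hG : G.IsTree) {x y : V}
    {p : G.Walk x y} (hp : p.IsPath) (hxy : x ≠ y) :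
    ∃ f : V → ℝ, f x = 1 ∧ f y = 0 ∧ ∑ e ∈ G.edgeFinset, edgeEnergy f e = 1 / p.length := by
  set S := p.edges.toFinset
  have hS : #S = p.length := by
    rw [List.toFinset_card_of_nodup hp.isTrail.edges_nodup, p.length_edges]
  have hSsub : S ⊆ G.edgeFinset := fun e he =>
    mem_edgeFinset.mpr (p.edges_subset_edgeSet (List.mem_toFinset.mp he))
  have hlen : (p.length : ℝ) ≠ 0 :=
    Nat.cast_ne_zero.mpr fun h => hxy (p.eq_of_length_eq_zero h)
  refine ⟨fun v => G.cutPotential x S v / p.length, ?_, ?_, ?_⟩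
  · dsimp only
    rw [cutPotential_self, hS, div_self hlen]
  · dsimp only
    rw [hG.isAcyclic.cutPotential_eq_zero hp fun e => List.mem_toFinset.mp, zero_div]
  · simp_rw [edgeEnergy_div_const, ← sum_div, hG.sum_edgeEnergy_cutPotential x hSsub, hS]
    field_simp

end Finite

end SimpleGraph

/-- Section 3: on a tree with natural weights, the effective resistance between
`x` and `y` equals the graph distance: the energy infimum over potentials with
`f x = 1`, `f y = 0` is attained with value `1/d(x,y)`. -/
theorem tree_effective_resistance_eq_dist
    {V : Type*} [Fintype V] (G : SimpleGraph V) [DecidableRel G.Adj]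
    (htree : G.IsTree)
    (E : (V → ℝ) → ℝ)
    (hE : ∀ f, E f = (1 / 2) * ∑ x, ∑ y,
      (if G.Adj x y then (1 : ℝ) else 0) * (f x - f y) ^ 2)
    (x y : V) (hxy : x ≠ y) (d : ℕ) (hd : d = G.dist x y) :
    (∃ f : V → ℝ, f x = 1 ∧ f y = 0 ∧ E f = 1 / (d : ℝ)) ∧
      ∀ g : V → ℝ, g x = 1 → g y = 0 → 1 / (d : ℝ) ≤ E g := by
  classical
  obtain ⟨p, hp, hlen⟩ := htree.connected.exists_path_of_dist x y
  subst hd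
  simp only [hE, SimpleGraph.half_sum_sum_adj_mul_sq_sub_eq_sum_edgeEnergy, ← hlen]
  exact ⟨htree.exists_sum_edgeEnergy_eq_one_div_length hp hxy,
    fun g hgx hgy => hp.isTrail.one_div_length_le_sum_edgeEnergy hgx hgy⟩
end

section
/- Let G be a simple graph on a finite vertex type V such that G is a tree, let x ∈ V, let S be a set of vertices, let A be a finite set of vertices, and let ρ ≥ 1 be a natural number. Assume that ρ ≤ G.dist x z for every z ∈ A, and that for every s ∈ S, every walk in G from x to s contains some vertex of A in its support. Then there exists g : V → ℝ with g x = 0, g s = 1 for every s ∈ S, and E_G(g) ≤ (|A| : ℝ)/(ρ : ℝ). -/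
/-!
Root the tree at `x`. For `a ∈ A`, the ramp potential of `a` grows by `1/ρ` along each of the
first `ρ` edges of the path from `x` to `a` and is constant across every other edge, so it
vanishes at `x`, equals `1` at every vertex whose path from `x` passes through `a`, and has energy
`ρ · (1/ρ)² = 1/ρ`. Every `s ∈ S` lies beyond some `a ∈ A`, so the pointwise maximum of the ramp
potentials is `1` on `S`; since `(max_a f_a u - max_a f_a v)² ≤ ∑_a (f_a u - f_a v)²`, its energy
is at most `|A|/ρ`.
-/

open SimpleGraph Finset

lemma Finset.sq_sup'_sub_sup'_le_sum_sq {ι : Type*} {s : Finset ι} (hs : s.Nonempty)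
    (f g : ι → ℝ) : (s.sup' hs f - s.sup' hs g) ^ 2 ≤ ∑ i ∈ s, (f i - g i) ^ 2 := by
  wlog hgf : s.sup' hs g ≤ s.sup' hs f generalizing f g
  · simpa only [sub_sq_comm] using this g f (le_of_not_ge hgf)
  obtain ⟨i, hi, hfi⟩ := s.exists_mem_eq_sup' hs f
  have hgi : g i ≤ s.sup' hs g := s.le_sup' g hi
  calc (s.sup' hs f - s.sup' hs g) ^ 2 ≤ (f i - g i) ^ 2 := by
        gcongr; all_goals linarith
    _ ≤ ∑ i ∈ s, (f i - g i) ^ 2 := single_le_sum (fun j _ => sq_nonneg (f j - g j)) hi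

namespace SimpleGraph

variable {V : Type*}

section Energy

variable [Fintype V] (G : SimpleGraph V) [DecidableRel G.Adj]

noncomputable def dirichletEnergy (f : V → ℝ) : ℝ :=
  (1 / 2) * ∑ x, ∑ y, (if G.Adj x y then (1 : ℝ) else 0) * (f x - f y) ^ 2

lemma dirichletEnergy_div_const (f : V → ℝ) (c : ℝ) :
    G.dirichletEnergy (fun v => f v / c) = G.dirichletEnergy f / c ^ 2 := by
  simp only [dirichletEnergy, ← sub_div, div_pow, mul_div_assoc', ← sum_div]

lemma dirichletEnergy_sup'_le_sum {ι : Type*} {s : Finset ι} (hs : s.Nonempty)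
    (h : ι → V → ℝ) :
    G.dirichletEnergy (fun v => s.sup' hs (h · v)) ≤ ∑ i ∈ s, G.dirichletEnergy (h i) := by
  calc G.dirichletEnergy (fun v => s.sup' hs (h · v))
      ≤ (1 / 2) * ∑ u, ∑ v, ∑ i ∈ s,
          (if G.Adj u v then (1 : ℝ) else 0) * (h i u - h i v) ^ 2 := by
        unfold dirichletEnergy
        gcongr with u _ v _
        rw [← mul_sum]
        exact mul_le_mul_of_nonneg_left (s.sq_sup'_sub_sup'_le_sum_sq hs _ _)
          (by split_ifs <;> norm_num)
    _ = ∑ i ∈ s, G.dirichletEnergy (h i) := by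
        rw [sum_comm_cycle, mul_sum]
        rfl

end Energy

variable {G : SimpleGraph V}

lemma IsAcyclic.support_subset_support_of_mem (hG : G.IsAcyclic) {x a s : V}
    {p : G.Walk x a} {q : G.Walk x s} (hp : p.IsPath) (hq : q.IsPath) (ha : a ∈ q.support) :
    p.support ⊆ q.support := by
  classical
  obtain rfl : p = q.takeUntil a ha :=
    congrArg Subtype.val ((hG.subsingleton_path x a).elim ⟨p, hp⟩ ⟨_, hq.takeUntil ha⟩)
  exact q.support_takeUntil_subset_support ha

lemma IsAcyclic.concat_or_concat_of_adj (hG : G.IsAcyclic) {x : V} {P : ∀ v, G.Walk x v}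
    (hP : ∀ v, (P v).IsPath) {u v : V} (h : G.Adj u v) :
    P v = (P u).concat h ∨ P u = (P v).concat h.symm := by
  by_cases hv : v ∈ (P u).support
  · exact .inr (hG.path_concat (hP v) (hP u) h.symm hv)
  · exact .inl (hG.path_concat (hP u) (hP v) h
      (hG.mem_support_of_ne_mem_support_of_adj_of_isPath (hP v) (hP u) h.symm hv))

namespace Walk

variable [DecidableEq V] {u v : V}

lemma card_filter_mem_support_concat (K : Finset V) (p : G.Walk u v) {w : V} (h : G.Adj v w)
    (hw : w ∉ p.support) :
    #{z ∈ K | z ∈ (p.concat h).support} = #{z ∈ K | z ∈ p.support} + if w ∈ K then 1 else 0 := by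
  simp only [support_concat, List.mem_append, List.mem_singleton, filter_or]
  rw [card_union_of_disjoint
    (disjoint_filter.2 fun z _ (hz : z ∈ p.support) (hzw : z = w) => hw (hzw ▸ hz))]
  split_ifs with hwK <;> simp [filter_eq', hwK]

lemma IsPath.card_image_getVert_Icc {p : G.Walk u v} (hp : p.IsPath) {n : ℕ}
    (hn : n ≤ p.length) : #((Icc 1 n).image p.getVert) = n := by
  rw [card_image_of_injOn (hp.getVert_injOn.mono fun i hi => ?_), Nat.card_Icc, Nat.add_sub_cancel]
  simp only [coe_Icc, Set.mem_Icc] at hi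
  exact hi.2.trans hn

lemma IsPath.start_notMem_image_getVert_Icc {p : G.Walk u v} (hp : p.IsPath) {n : ℕ}
    (hn : n ≤ p.length) : u ∉ (Icc 1 n).image p.getVert := by
  simp only [mem_image, mem_Icc, not_exists, not_and, and_imp]
  intro i hi1 hin hi
  have : i = 0 := hp.getVert_injOn (by simp; omega) (by simp) (hi.trans p.getVert_zero.symm)
  omega

end Walk

section Potential

variable [DecidableEq V] {x : V}

def pathCount (P : ∀ v, G.Walk x v) (K : Finset V) (v : V) : ℕ :=
  #{w ∈ K | w ∈ (P v).support}

variable {P : ∀ v, G.Walk x v} (K : Finset V)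

lemma pathCount_of_concat (hP : ∀ v, (P v).IsPath) {u v : V} (h : G.Adj u v)
    (he : P v = (P u).concat h) :
    pathCount P K v = pathCount P K u + if v ∈ K then 1 else 0 := by
  have hv : v ∉ (P u).support := ((Walk.concat_isPath_iff h).1 (he ▸ hP v)).2
  rw [pathCount, he, Walk.card_filter_mem_support_concat K _ h hv, pathCount]

/-- Across an edge, `pathCount` changes only if the endpoint farther from the root lies in `K`,
and that endpoint determines the edge: the other end is the penultimate vertex of its path. -/
lemma sq_pathCount_sub_le (hG : G.IsAcyclic) (hP : ∀ v, (P v).IsPath) {u v : V}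
    (h : G.Adj u v) :
    ((pathCount P K u : ℝ) - pathCount P K v) ^ 2 ≤
      (if v ∈ K ∧ u = (P v).penultimate then 1 else 0) +
        (if u ∈ K ∧ v = (P u).penultimate then 1 else 0) := by
  have step : ∀ u v (h : G.Adj u v), P v = (P u).concat h →
      ((pathCount P K u : ℝ) - pathCount P K v) ^ 2 =
        if v ∈ K ∧ u = (P v).penultimate then 1 else 0 := by
    intro u v h he
    have hu : u ∈ (P v).support :=
      he ▸ (P u).support_subset_support_concat h (P u).end_mem_support
    rw [pathCount_of_concat K hP h he, ← hG.eq_penultimate_of_adj_end (hP v) h.symm hu]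
    split_ifs <;> simp_all
  rcases hG.concat_or_concat_of_adj hP h with he | he
  · rw [step u v h he]
    exact le_add_of_nonneg_right (ite_nonneg zero_le_one le_rfl)
  · rw [sub_sq_comm, step v u h.symm he]
    exact le_add_of_nonneg_left (ite_nonneg zero_le_one le_rfl)

lemma dirichletEnergy_pathCount_le [Fintype V] [DecidableRel G.Adj] (hG : G.IsAcyclic)
    (hP : ∀ v, (P v).IsPath) : G.dirichletEnergy (fun v => (pathCount P K v : ℝ)) ≤ #K := by
  calc G.dirichletEnergy (fun v => (pathCount P K v : ℝ))
      ≤ (1 / 2) * ∑ u, ∑ v, ((if v ∈ K ∧ u = (P v).penultimate then (1 : ℝ) else 0) +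
          (if u ∈ K ∧ v = (P u).penultimate then 1 else 0)) := by
        unfold dirichletEnergy
        gcongr with u _ v _
        by_cases h : G.Adj u v
        · rw [if_pos h, one_mul]
          exact sq_pathCount_sub_le K hG hP h
        · rw [if_neg h, zero_mul]
          positivity
    _ = #K := by
        simp only [sum_add_distrib]
        rw [sum_comm]
        simp [ite_and]
        ring

lemma pathCount_root (hP : ∀ v, (P v).IsPath) (hx : x ∉ K) : pathCount P K x = 0 := by
  rw [pathCount, Walk.nil_iff_support_eq.1 (Walk.isPath_iff_nil.1 (hP x))]
  simpa using hx

lemma pathCount_le_card (v : V) : pathCount P K v ≤ #K := card_filter_le _ _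

lemma pathCount_eq_card {v : V} (hK : ∀ w ∈ K, w ∈ (P v).support) : pathCount P K v = #K := by
  rw [pathCount, filter_true_of_mem hK]

variable (P) in
noncomputable def rampPotential (ρ : ℕ) (a v : V) : ℝ :=
  pathCount P ((Icc 1 ρ).image (P a).getVert) v / ρ

variable {ρ : ℕ} {a : V}

lemma rampPotential_root (hP : ∀ v, (P v).IsPath) (hlen : ρ ≤ (P a).length) :
    rampPotential P ρ a x = 0 := by
  rw [rampPotential, pathCount_root _ hP ((hP a).start_notMem_image_getVert_Icc hlen),
    Nat.cast_zero, zero_div]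

lemma rampPotential_le_one (hP : ∀ v, (P v).IsPath) (hlen : ρ ≤ (P a).length) (v : V) :
    rampPotential P ρ a v ≤ 1 := by
  refine div_le_one_of_le₀ ?_ ρ.cast_nonneg
  exact_mod_cast (pathCount_le_card _ v).trans ((hP a).card_image_getVert_Icc hlen).le

lemma rampPotential_eq_one (hG : G.IsAcyclic) (hP : ∀ v, (P v).IsPath)
    (hlen : ρ ≤ (P a).length) (hρ : ρ ≠ 0) {s : V}
    (ha : a ∈ (P s).support) : rampPotential P ρ a s = 1 := by
  have hK : ∀ w ∈ (Icc 1 ρ).image (P a).getVert, w ∈ (P s).support := by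
    simp only [mem_image]
    rintro _ ⟨i, -, rfl⟩
    exact hG.support_subset_support_of_mem (hP a) (hP s) ha ((P a).getVert_mem_support i)
  rw [rampPotential, pathCount_eq_card _ hK, (hP a).card_image_getVert_Icc hlen,
    div_self (Nat.cast_ne_zero.2 hρ)]

lemma dirichletEnergy_rampPotential_le [Fintype V] [DecidableRel G.Adj] (hG : G.IsAcyclic)
    (hP : ∀ v, (P v).IsPath) (hlen : ρ ≤ (P a).length) :
    G.dirichletEnergy (rampPotential P ρ a) ≤ 1 / ρ := by
  have hK := (hP a).card_image_getVert_Icc hlen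
  calc G.dirichletEnergy (rampPotential P ρ a)
      = G.dirichletEnergy (fun v => (pathCount P ((Icc 1 ρ).image (P a).getVert) v : ℝ)) / ρ ^ 2 :=
        dirichletEnergy_div_const G _ _
    _ ≤ ρ / ρ ^ 2 := by
        gcongr
        exact (dirichletEnergy_pathCount_le _ hG hP).trans_eq (by rw [hK])
    _ = 1 / ρ := by
        rcases eq_or_ne (ρ : ℝ) 0 with h | h
        · simp [h]
        · field_simp

end Potential

end SimpleGraph

/-- Core of the lower bound of Lemma 4.4: on a tree, if every walk from `x` to a
point of `S` passes through a set `A` of vertices, each at distance at least `ρ`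
from `x`, then there is a potential `g` with `g x = 0`, `g ≡ 1` on `S` and
energy at most `|A|/ρ`; hence `R(x, S) ≥ ρ/|A|`. -/
theorem tree_resistance_cut_set_bound
    {V : Type*} [Fintype V] (G : SimpleGraph V) [DecidableRel G.Adj]
    (htree : G.IsTree)
    (E : (V → ℝ) → ℝ)
    (hE : ∀ f, E f = (1 / 2) * ∑ x, ∑ y,
      (if G.Adj x y then (1 : ℝ) else 0) * (f x - f y) ^ 2)
    (x : V) (S : Set V) (A : Finset V) (ρ : ℕ) (hρ : 1 ≤ ρ)
    (hdist : ∀ z ∈ A, ρ ≤ G.dist x z)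
    (hcut : ∀ s ∈ S, ∀ w : G.Walk x s, ∃ a ∈ A, a ∈ w.support) :
    ∃ g : V → ℝ, g x = 0 ∧ (∀ s ∈ S, g s = 1) ∧ E g ≤ (A.card : ℝ) / (ρ : ℝ) := by
  classical
  choose P hP using fun v => (htree.existsUnique_path x v).exists
  have hG := htree.isAcyclic
  rcases A.eq_empty_or_nonempty with rfl | hA
  · refine ⟨0, rfl, fun s hs => ?_, by simp [hE]⟩
    obtain ⟨a, ha, -⟩ := hcut s hs (P s)
    exact absurd ha (notMem_empty a)
  have hlen : ∀ a ∈ A, ρ ≤ (P a).length := fun a ha => (hdist a ha).trans (dist_le _)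
  refine ⟨fun v => A.sup' hA fun a => rampPotential P ρ a v, ?_, fun s hs => ?_, ?_⟩
  · simp only [sup'_congr hA rfl fun a ha => rampPotential_root hP (hlen a ha), sup'_const]
  · obtain ⟨a, ha, has⟩ := hcut s hs (P s)
    refine le_antisymm (sup'_le _ _ fun b hb => rampPotential_le_one hP (hlen b hb) s) ?_
    exact le_sup'_of_le _ ha (rampPotential_eq_one hG hP (hlen a ha) (by omega) has).ge
  · calc E _ ≤ ∑ a ∈ A, G.dirichletEnergy (rampPotential P ρ a) :=
          hE _ ▸ dirichletEnergy_sup'_le_sum G hA _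
      _ ≤ ∑ _a ∈ A, 1 / (ρ : ℝ) :=
          sum_le_sum fun a ha => dirichletEnergy_rampPotential_le hG hP (hlen a ha)
      _ = A.card / ρ := by rw [sum_const, nsmul_eq_mul, mul_one_div]
end

section
/- Let r > 0 and V > 0 be real numbers, and let ψ : ℝ → ℝ be a function such that ψ(t) > 0 for all t > 0, ψ is nonincreasing on (0,∞), and for every t > 0, ψ is differentiable at t with deriv ψ t ≤ (2/V^2 - ψ(t/2)^2)/r. Then for every t > 0, ψ(t) ≤ max (2/V) (2*r/t). -/
/-! If `ψ(t)` exceeded `2/V`, then on `[t, 2t]` monotonicity gives `ψ(s/2) ≥ ψ(t)`, so the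
differential inequality forces `ψ' ≤ -ψ(t)²/(2r)` there. Integrating from `t` to `2t` and using
`ψ(2t) > 0` yields `t ψ(t)² / (2r) < ψ(t)`, that is `ψ(t) < 2r/t`. -/

open Set

lemma two_div_sq_sub_sq_le_neg_half_sq {V a b : ℝ} (hV : 0 < V) (ha : 2 / V < a)
    (hab : a ≤ b) : 2 / V ^ 2 - b ^ 2 ≤ -(a ^ 2 / 2) := by
  have hVa : 2 < a * V := by rwa [div_lt_iff₀ hV] at ha
  have ha_pos : 0 < a := lt_trans (by positivity) ha
  have hb_sq : a ^ 2 ≤ b ^ 2 := pow_le_pow_left₀ ha_pos.le hab 2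
  have hV_sq : 2 / V ^ 2 ≤ a ^ 2 / 2 := by
    rw [div_le_div_iff₀ (by positivity) two_pos]
    nlinarith
  linarith

section DifferentialInequality

variable {r V : ℝ} {ψ : ℝ → ℝ}

lemma deriv_le_neg_sq_div_of_mem_Ioc (hr : 0 < r) (hV : 0 < V)
    (hmono : AntitoneOn ψ (Ioi 0))
    (hderiv : ∀ t > 0, DifferentiableAt ℝ ψ t ∧ deriv ψ t ≤ (2 / V ^ 2 - ψ (t / 2) ^ 2) / r)
    {t s : ℝ} (ht : 0 < t) (hψt : 2 / V < ψ t) (hs : s ∈ Ioc t (2 * t)) :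
    deriv ψ s ≤ -(ψ t ^ 2 / (2 * r)) := by
  have hs_pos : 0 < s := ht.trans hs.1
  have hψ_half : ψ t ≤ ψ (s / 2) :=
    hmono (mem_Ioi.2 (half_pos hs_pos)) (mem_Ioi.2 ht) (by linarith [hs.2])
  calc deriv ψ s ≤ (2 / V ^ 2 - ψ (s / 2) ^ 2) / r := (hderiv s hs_pos).2
    _ ≤ -(ψ t ^ 2 / 2) / r := by
      gcongr
      exact two_div_sq_sub_sq_le_neg_half_sq hV hψt hψ_half
    _ = -(ψ t ^ 2 / (2 * r)) := by ring

lemma apply_two_mul_le_sub (hr : 0 < r) (hV : 0 < V)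
    (hmono : AntitoneOn ψ (Ioi 0))
    (hderiv : ∀ t > 0, DifferentiableAt ℝ ψ t ∧ deriv ψ t ≤ (2 / V ^ 2 - ψ (t / 2) ^ 2) / r)
    {t : ℝ} (ht : 0 < t) (hψt : 2 / V < ψ t) :
    ψ (2 * t) ≤ ψ t - ψ t ^ 2 / (2 * r) * t := by
  have hdiff : ∀ s ∈ Icc t (2 * t), DifferentiableAt ℝ ψ s :=
    fun s hs => (hderiv s (ht.trans_le hs.1)).1
  have hmvt := (convex_Icc t (2 * t)).image_sub_le_mul_sub_of_deriv_le
    (fun s hs => (hdiff s hs).continuousAt.continuousWithinAt)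
    (fun s hs => (hdiff s (interior_subset hs)).differentiableWithinAt)
    (fun s hs => by
      rw [interior_Icc] at hs
      exact deriv_le_neg_sq_div_of_mem_Ioc hr hV hmono hderiv ht hψt ⟨hs.1, hs.2.le⟩)
    t (left_mem_Icc.2 (by linarith)) (2 * t) (right_mem_Icc.2 (by linarith)) (by linarith)
  linarith

end DifferentialInequality

/-- Analytic core of Theorem 4.1: if `ψ > 0` is nonincreasing on `(0,∞)` and
satisfies the differential inequality `ψ'(t) ≤ (2/V² - ψ(t/2)²)/r`, then
`ψ(t) ≤ (2/V) ∨ (2r/t)` for all `t > 0`. -/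
theorem differential_inequality_heat_kernel_bound
    (r V : ℝ) (hr : 0 < r) (hV : 0 < V) (ψ : ℝ → ℝ)
    (hpos : ∀ t > 0, 0 < ψ t)
    (hmono : AntitoneOn ψ (Set.Ioi (0 : ℝ)))
    (hderiv : ∀ t > 0, DifferentiableAt ℝ ψ t ∧
      deriv ψ t ≤ (2 / V ^ 2 - ψ (t / 2) ^ 2) / r) :
    ∀ t > 0, ψ t ≤ max (2 / V) (2 * r / t) := by
  intro t ht
  refine le_max_iff.2 (or_iff_not_imp_left.2 fun hψt => ?_)
  have hψt_pos : 0 < ψ t := hpos t ht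
  have hdecay := apply_two_mul_le_sub hr hV hmono hderiv ht (not_le.1 hψt)
  have hψ2t_pos : 0 < ψ (2 * t) := hpos (2 * t) (by linarith)
  have hsmall : ψ t * t / (2 * r) * ψ t < ψ t := by
    calc ψ t * t / (2 * r) * ψ t = ψ t ^ 2 / (2 * r) * t := by ring
      _ < ψ t := by linarith
  have hlt : ψ t * t / (2 * r) < 1 := (mul_lt_iff_lt_one_left hψt_pos).1 hsmall
  rw [le_div_iff₀ ht]
  rw [div_lt_one (by positivity)] at hlt
  exact hlt.le
end
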